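/- The map Ξ_{ℓ,r} satisfies for all t ≥ 0 the recursive pointwise identity Ξ_{ℓ,r}(ψ)(t) = max( Ξ_{ℓ,r}(ψ)(t−), ψ(t) − r(t) ) ∧ (ψ(t) − ℓ(t)), where Ξ_{ℓ,r}(ψ)(t−) denotes the supremum form taken with inner intervals [0,t) and [s,t) in place of [0,t] and [s,t]. -/

import Mathlib

open Set Filter

/-- A càdlàg real-valued function on `[0, ∞)`. -/
def Cadlag (f : ℝ → ℝ) : Prop :=
  ∀ t : ℝ, 0 ≤ t → ContinuousWithinAt f (Set.Ici t) t ∧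
    (0 < t → ∃ l : ℝ, Filter.Tendsto f (nhdsWithin t (Set.Iio t)) (nhds l))

/-- The explicit functional `Ξ_{ℓ,r}(ψ)(t)`. -/
noncomputable def Xi (l r ψ : ℝ → ℝ) (t : ℝ) : ℝ :=
  max (min (max (ψ 0 - r 0) 0) (sInf ((fun u => ψ u - l u) '' Set.Icc 0 t)))
      (sSup ((fun s => min (ψ s - r s) (sInf ((fun u => ψ u - l u) '' Set.Icc s t)))
        '' Set.Icc 0 t))

/-- The left-limit form `Ξ_{ℓ,r}(ψ)(t-)`: the same expression with the closed
intervals `[0,t]` and `[s,t]` replaced by the half-open intervals `[0,t)` and `[s,t)`. -/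
noncomputable def XiMinus (l r ψ : ℝ → ℝ) (t : ℝ) : ℝ :=
  max (min (max (ψ 0 - r 0) 0) (sInf ((fun u => ψ u - l u) '' Set.Ico 0 t)))
      (sSup ((fun s => min (ψ s - r s) (sInf ((fun u => ψ u - l u) '' Set.Ico s t)))
        '' Set.Ico 0 t))

/-!
Splitting off the endpoint, `[s, t] = [s, t) ∪ {t}`, turns every infimum over `[s, t]` into
`(ψ(t) − ℓ(t)) ∧` the infimum over `[s, t)`, and the supremum over `s ∈ [0, t]` into the
supremum over `s ∈ [0, t)` together with the term `s = t`, which is `(ψ(t) − r(t)) ∧ (ψ(t) − ℓ(t))`.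
Since `∧ c` commutes with suprema, the identity is then a lattice identity in `ℝ`. The infima and
suprema involved are genuine, not junk values, because a càdlàg function is bounded on `[0, t]`:
it has finite one-sided limits everywhere, so it is locally bounded, and `[0, t]` is compact.
-/

open Bornology

lemma Filter.Tendsto.exists_mem_isBounded_image {α β : Type*} [PseudoMetricSpace β]
    {f : α → β} {F : Filter α} {L : β} (h : Tendsto f F (nhds L)) :
    ∃ u ∈ F, Bornology.IsBounded (f '' u) :=
  ⟨f ⁻¹' Metric.ball L 1, h (Metric.ball_mem_nhds L one_pos),
    Metric.isBounded_ball.subset (image_preimage_subset _ _)⟩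

namespace Cadlag

variable {f g : ℝ → ℝ}

lemma sub (hf : Cadlag f) (hg : Cadlag g) : Cadlag (f - g) := fun t ht =>
  ⟨(hf t ht).1.sub (hg t ht).1, fun htpos =>
    let ⟨a, ha⟩ := (hf t ht).2 htpos
    let ⟨b, hb⟩ := (hg t ht).2 htpos
    ⟨a - b, ha.sub hb⟩⟩

lemma exists_mem_nhdsWithin_isBounded_image (hf : Cadlag f) {x : ℝ} (hx : 0 ≤ x) :
    ∃ u ∈ nhdsWithin x (Ici 0), IsBounded (f '' u) := by
  obtain ⟨hright, hleft⟩ := hf x hx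
  obtain ⟨u, hu, hub⟩ := hright.tendsto.exists_mem_isBounded_image
  rcases hx.eq_or_lt with rfl | hxpos
  · exact ⟨u, hu, hub⟩
  · obtain ⟨L, hL⟩ := hleft hxpos
    obtain ⟨v, hv, hvb⟩ := hL.exists_mem_isBounded_image
    have huv : u ∪ v ∈ nhds x := by
      rw [← nhdsLT_sup_nhdsGE]
      exact union_comm u v ▸ union_mem_sup hv hu
    exact ⟨u ∪ v, nhdsWithin_le_nhds huv, image_union f u v ▸ hub.union hvb⟩

lemma isBounded_image_Icc (hf : Cadlag f) (t : ℝ) : IsBounded (f '' Icc 0 t) := by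
  refine isCompact_Icc.induction_on (p := fun s => IsBounded (f '' s)) ?_ ?_ ?_ ?_
  · simp
  · exact fun s s' hss' h => h.subset (image_mono hss')
  · exact fun s s' hs hs' => image_union f s s' ▸ hs.union hs'
  · intro x hx
    obtain ⟨u, hu, hub⟩ := hf.exists_mem_nhdsWithin_isBounded_image hx.1
    exact ⟨u, nhdsWithin_mono x Icc_subset_Ici_self hu, hub⟩

end Cadlag

section EndpointSplitting

variable {α β : Type*} [LinearOrder α] [ConditionallyCompleteLinearOrder β]
  {f g : α → β} {a t : α}

lemma csInf_image_Icc_eq_min (hat : a < t) (hf : BddBelow (f '' Ico a t)) :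
    sInf (f '' Icc a t) = min (f t) (sInf (f '' Ico a t)) := by
  rw [← Ico_insert_right hat.le, image_insert_eq, csInf_insert hf ⟨f a, a, ⟨le_rfl, hat⟩, rfl⟩]

variable [TopologicalSpace β] [OrderTopology β]

lemma csSup_image_Icc_min_csInf (hat : a < t) (hf : BddBelow (f '' Ico a t))
    (hg : BddAbove (g '' Ico a t)) :
    sSup ((fun s => min (g s) (sInf (f '' Icc s t))) '' Icc a t) =
      max (min (g t) (f t))
        (min (sSup ((fun s => min (g s) (sInf (f '' Ico s t))) '' Ico a t)) (f t)) := by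
  set φ : α → β := fun s => min (g s) (sInf (f '' Ico s t))
  have hφ_ne : (φ '' Ico a t).Nonempty := ⟨φ a, a, ⟨le_rfl, hat⟩, rfl⟩
  have hφ_bdd : BddAbove (φ '' Ico a t) := by
    obtain ⟨M, hM⟩ := hg
    exact ⟨M, forall_mem_image.2 fun s hs => (min_le_left _ _).trans (hM (mem_image_of_mem g hs))⟩
  have h_split : (fun s => min (g s) (sInf (f '' Icc s t))) '' Ico a t =
      (fun x => min x (f t)) '' (φ '' Ico a t) := by
    rw [image_image]
    refine image_congr fun s hs => ?_
    rw [csInf_image_Icc_eq_min hs.2 (hf.mono (image_mono (Ico_subset_Ico_left hs.1))),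
      min_comm (f t), ← min_assoc]
  have h_min_sup : sSup ((fun x => min x (f t)) '' (φ '' Ico a t)) = min (sSup (φ '' Ico a t)) (f t) :=
    (Monotone.map_csSup_of_continuousAt (continuous_id.min continuous_const).continuousAt
      (fun _ _ h => min_le_min_right _ h) hφ_ne hφ_bdd).symm
  have h_bdd : BddAbove ((fun s => min (g s) (sInf (f '' Icc s t))) '' Ico a t) :=
    h_split ▸ ⟨f t, forall_mem_image.2 fun _ _ => min_le_right _ _⟩
  rw [← Ico_insert_right hat.le, image_insert_eq, csSup_insert h_bdd ⟨_, a, ⟨le_rfl, hat⟩, rfl⟩,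
    h_split, h_min_sup, Icc_self, image_singleton, csInf_singleton]

lemma max_min_csInf_csSup_Icc_eq (A : β) (hat : a < t) (hf : BddBelow (f '' Ico a t))
    (hg : BddAbove (g '' Ico a t)) :
    max (min A (sInf (f '' Icc a t)))
        (sSup ((fun s => min (g s) (sInf (f '' Icc s t))) '' Icc a t)) =
      min (max (max (min A (sInf (f '' Ico a t)))
        (sSup ((fun s => min (g s) (sInf (f '' Ico s t))) '' Ico a t))) (g t)) (f t) := by
  rw [csInf_image_Icc_eq_min hat hf, csSup_image_Icc_min_csInf hat hf hg, min_comm (f t),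
    ← min_assoc, min_max_distrib_right, min_max_distrib_right, max_comm (min (g t) _), ← max_assoc]

end EndpointSplitting

theorem xi_recursion_general (l r ψ : ℝ → ℝ)
    (hl : Cadlag l) (hr : Cadlag r)
    (hψ : Cadlag ψ) (t : ℝ) (ht : 0 < t) :
    Xi l r ψ t = min (max (XiMinus l r ψ t) (ψ t - r t)) (ψ t - l t) := by
  have hψl := (hψ.sub hl).isBounded_image_Icc t
  have hψr := (hψ.sub hr).isBounded_image_Icc t
  exact max_min_csInf_csSup_Icc_eq (f := fun u => ψ u - l u) (g := fun u => ψ u - r u) _ ht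
    (hψl.bddBelow.mono (image_mono Ico_subset_Icc_self))
    (hψr.bddAbove.mono (image_mono Ico_subset_Icc_self))

/-- The recursive pointwise identity
`Ξ_{ℓ,r}(ψ)(t) = max( Ξ_{ℓ,r}(ψ)(t-), ψ(t) - r(t) ) ∧ (ψ(t) - ℓ(t))` for `t > 0`. -/
theorem xi_recursion (l r ψ : ℝ → ℝ)
    (hl : Cadlag l) (hr : Cadlag r) (hlr : ∀ t : ℝ, 0 ≤ t → l t ≤ r t)
    (hψ : Cadlag ψ) (t : ℝ) (ht : 0 < t) :
    Xi l r ψ t = min (max (XiMinus l r ψ t) (ψ t - r t)) (ψ t - l t) :=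
  xi_recursion_general l r ψ hl hr hψ t ht
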